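/- arXiv:hep-th/0703182 — 6 statements merged into one kernel-verified Lean document; each statement's English description precedes it below -/
import Mathlib

section
/- The matrices g₁ and g₂ satisfy g₁³ = 1, g₂³ = 1 and g₁g₂ = g₂g₁, and the subgroup of GL(10,ℤ) they generate has order 9; hence g₁ and g₂ generate a faithful action of ℤ₃×ℤ₃ on ℤ¹⁰. -/
open Matrix

/-- The generator `g₁` of the ℤ₃×ℤ₃ action on the degree-2 homology lattice of the
ℤ₃×ℤ₃-symmetric dP₉ surface, in the basis (σ, f, θ₁₁, θ₂₁, θ₃₁, θ₃₂, θ₄₁, θ₄₂, μ, ν). -/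
def g1mat : Matrix (Fin 10) (Fin 10) ℤ :=
  !![0,0,0,3,0,0,0,0,-1,-1;
     0,1,0,3,0,1,0,1,-1,-1;
     0,0,1,0,0,0,0,0,0,0;
     0,0,0,-2,0,0,0,0,1,0;
     0,0,0,-2,0,-1,0,0,1,1;
     0,0,0,-1,1,-1,0,0,0,1;
     0,0,0,-2,0,0,0,-1,1,1;
     0,0,0,-1,0,0,1,-1,0,0;
     1,0,0,-3,0,0,0,0,2,1;
     0,0,0,0,0,0,0,0,0,1]

/-- The generator `g₂` of the ℤ₃×ℤ₃ action. -/
def g2mat : Matrix (Fin 10) (Fin 10) ℤ :=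
  !![0,0,3,0,0,0,0,0,-1,-1;
     0,1,3,0,1,0,0,1,-1,-1;
     0,0,-2,0,0,0,0,0,0,1;
     0,0,0,1,0,0,0,0,0,0;
     0,0,-1,0,-1,1,0,0,1,0;
     0,0,-2,0,-1,0,0,0,1,1;
     0,0,-2,0,0,0,0,-1,1,1;
     0,0,-1,0,0,0,1,-1,0,0;
     0,0,0,0,0,0,0,0,1,0;
     1,0,-3,0,0,0,0,0,1,2]

/-!
Two commuting elements `a`, `b` of a group generate the image of
`zpowers a × zpowers b`, and this map is injective once the two cyclic subgroups meet
trivially, so the generated group has order `orderOf a * orderOf b`. For `g₁`, `g₂` everything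
left to check is finite matrix arithmetic: the cubes, the commutation, and that `g₁ⁱ = g₂ʲ`
with `i, j < 3` forces `g₁ⁱ = 1`.
-/

open Subgroup

theorem Subgroup.closure_pair_eq_zpowers_sup {G : Type*} [Group G] (a b : G) :
    closure ({a, b} : Set G) = zpowers a ⊔ zpowers b := by
  rw [← Set.singleton_union, closure_union, zpowers_eq_closure, zpowers_eq_closure]

theorem Commute.card_closure_pair {G : Type*} [Group G] {a b : G} (hab : Commute a b)
    (hdisj : Disjoint (zpowers a) (zpowers b)) :
    Nat.card (closure ({a, b} : Set G)) = orderOf a * orderOf b := by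
  let φ := (zpowers a).subtype.noncommCoprod (zpowers b).subtype <| by
    rintro ⟨_, i, rfl⟩ ⟨_, j, rfl⟩
    exact hab.zpow_zpow i j
  have hinj : Function.Injective φ := (MonoidHom.noncommCoprod_injective _ _ _).2
    ⟨subtype_injective _, subtype_injective _, by simpa only [range_subtype] using hdisj⟩
  have hrange : φ.range = closure {a, b} := by
    rw [MonoidHom.noncommCoprod_range, range_subtype, range_subtype, closure_pair_eq_zpowers_sup]
  rw [← hrange, ← Nat.card_congr (MonoidHom.ofInjective hinj).toEquiv, Nat.card_prod,
    Nat.card_zpowers, Nat.card_zpowers]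

theorem IsOfFinOrder.disjoint_zpowers_iff {G : Type*} [Group G] {a b : G} (ha : IsOfFinOrder a)
    (hb : IsOfFinOrder b) :
    Disjoint (zpowers a) (zpowers b) ↔
      ∀ i < orderOf a, ∀ j < orderOf b, a ^ i = b ^ j → a ^ i = 1 := by
  classical
  simp only [disjoint_def', ha.mem_zpowers_iff_mem_range_orderOf,
    hb.mem_zpowers_iff_mem_range_orderOf, Finset.mem_image, Finset.mem_range]
  constructor
  · intro h i hi j hj hij
    exact h ⟨i, hi, rfl⟩ ⟨j, hj, rfl⟩ hij
  · rintro h _ _ ⟨i, hi, rfl⟩ ⟨j, hj, rfl⟩ hij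
    exact h i hi j hj hij

theorem g1mat_pow_three : g1mat ^ 3 = 1 := by decide

theorem g2mat_pow_three : g2mat ^ 3 = 1 := by decide

theorem g1mat_mul_g2mat_comm : g1mat * g2mat = g2mat * g1mat := by decide

theorem g1mat_pow_eq_g2mat_pow : ∀ i < 3, ∀ j < 3, g1mat ^ i = g2mat ^ j → g1mat ^ i = 1 := by
  decide

def g1unit : (Matrix (Fin 10) (Fin 10) ℤ)ˣ :=
  Units.ofPowEqOne g1mat 3 g1mat_pow_three three_ne_zero

def g2unit : (Matrix (Fin 10) (Fin 10) ℤ)ˣ :=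
  Units.ofPowEqOne g2mat 3 g2mat_pow_three three_ne_zero

@[simp] theorem val_g1unit : (g1unit : Matrix (Fin 10) (Fin 10) ℤ) = g1mat := rfl

@[simp] theorem val_g2unit : (g2unit : Matrix (Fin 10) (Fin 10) ℤ) = g2mat := rfl

theorem orderOf_g1unit : orderOf g1unit = 3 := by
  rw [← orderOf_units, val_g1unit]
  exact orderOf_eq_prime g1mat_pow_three (by decide)

theorem orderOf_g2unit : orderOf g2unit = 3 := by
  rw [← orderOf_units, val_g2unit]
  exact orderOf_eq_prime g2mat_pow_three (by decide)

theorem commute_g1unit_g2unit : Commute g1unit g2unit := Units.ext g1mat_mul_g2mat_comm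

theorem disjoint_zpowers_g1unit_g2unit : Disjoint (zpowers g1unit) (zpowers g2unit) := by
  rw [IsOfFinOrder.disjoint_zpowers_iff (orderOf_pos_iff.1 (by rw [orderOf_g1unit]; norm_num))
    (orderOf_pos_iff.1 (by rw [orderOf_g2unit]; norm_num)), orderOf_g1unit, orderOf_g2unit]
  simpa only [Units.ext_iff, Units.val_pow_eq_pow_val, val_g1unit, val_g2unit, Units.val_one]
    using g1mat_pow_eq_g2mat_pow

/-- `g₁³ = 1`, `g₂³ = 1`, `g₁g₂ = g₂g₁`, and the subgroup of GL(10,ℤ) generated by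
`g₁` and `g₂` has order 9; hence `g₁` and `g₂` generate a faithful action of ℤ₃×ℤ₃ on ℤ¹⁰. -/
theorem g1_g2_generate_Z3_Z3 :
    g1mat ^ 3 = 1 ∧ g2mat ^ 3 = 1 ∧ g1mat * g2mat = g2mat * g1mat ∧
    ∃ u1 u2 : (Matrix (Fin 10) (Fin 10) ℤ)ˣ,
      (u1 : Matrix (Fin 10) (Fin 10) ℤ) = g1mat ∧
      (u2 : Matrix (Fin 10) (Fin 10) ℤ) = g2mat ∧
      Nat.card (Subgroup.closure ({u1, u2} : Set (Matrix (Fin 10) (Fin 10) ℤ)ˣ)) = 9 := by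
  refine ⟨g1mat_pow_three, g2mat_pow_three, g1mat_mul_g2mat_comm, g1unit, g2unit, rfl, rfl, ?_⟩
  rw [commute_g1unit_g2unit.card_closure_pair disjoint_zpowers_g1unit_g2unit, orderOf_g1unit,
    orderOf_g2unit]
end

section
/- The sublattice of simultaneous fixed vectors {x ∈ ℤ¹⁰ : g₁x = x and g₂x = x} is exactly the ℤ-span of the two vectors f and t; in particular the ℤ₃×ℤ₃-invariant homology of the dP₉ surface is free of rank 2 with basis {f, t}. -/
open Matrix

/-- The fiber class `f`. -/
def fvec : Fin 10 → ℤ := ![0,1,0,0,0,0,0,0,0,0]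

/-- The class `t`, pull-back of the hyperplane class. -/
def tvec : Fin 10 → ℤ := ![-3,-3,1,1,2,2,3,1,3,3]

/-! The fixed-point equations of `g₁` and `g₂` force x₃ = x₇ = x₂, x₄ = x₅ = 2x₂, x₀ = -3x₂ and
x₆ = x₈ = x₉ = 3x₂, leaving x₁ and x₂ free, so every invariant vector is
(x₁ + 3x₂)·f + x₂·t. -/

theorem span_subset_setOf_mulVec_eq_self {R n : Type*} [CommRing R] [Fintype n]
    {A B : Matrix n n R} {s : Set (n → R)}
    (hs : ∀ v ∈ s, A *ᵥ v = v ∧ B *ᵥ v = v) :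
    ↑(Submodule.span R s) ⊆ {x : n → R | A *ᵥ x = x ∧ B *ᵥ x = x} := by
  let fixed : Submodule R (n → R) :=
    A.mulVecLin.eqLocus LinearMap.id ⊓ B.mulVecLin.eqLocus LinearMap.id
  exact (Submodule.span_le (p := fixed)).mpr hs

theorem g1mat_mulVec_fvec : g1mat *ᵥ fvec = fvec := by decide

theorem g2mat_mulVec_fvec : g2mat *ᵥ fvec = fvec := by decide

theorem g1mat_mulVec_tvec : g1mat *ᵥ tvec = tvec := by decide

theorem g2mat_mulVec_tvec : g2mat *ᵥ tvec = tvec := by decide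

theorem eq_smul_fvec_add_smul_tvec_of_mulVec_eq_self {x : Fin 10 → ℤ}
    (h1 : g1mat *ᵥ x = x) (h2 : g2mat *ᵥ x = x) :
    x = (x 1 + 3 * x 2) • fvec + x 2 • tvec := by
  simp only [funext_iff, Fin.forall_fin_succ, IsEmpty.forall_iff, g1mat, g2mat, mulVec,
    dotProduct, Fin.sum_univ_succ, Fin.sum_univ_zero, of_apply, cons_val, Fin.reduceSucc] at h1 h2
  ext i
  fin_cases i <;>
    simp only [fvec, tvec, Pi.add_apply, Pi.smul_apply, smul_eq_mul, cons_val, Fin.reduceFinMk] <;>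
    omega

theorem linearIndependent_fvec_tvec : LinearIndependent ℤ ![fvec, tvec] := by
  refine LinearIndependent.pair_iff.mpr fun a b hab => ?_
  have h1 : a * 1 + b * -3 = 0 := congrFun hab 1
  have h2 : a * 0 + b * 1 = 0 := congrFun hab 2
  omega

/-- The sublattice of simultaneous fixed vectors of `g₁` and `g₂` in ℤ¹⁰ is exactly the
ℤ-span of `f` and `t`; in particular the ℤ₃×ℤ₃-invariant homology of the dP₉ surface is
free of rank 2 with basis `{f, t}`. -/
theorem invariant_homology_dP9 :
    {x : Fin 10 → ℤ | g1mat.mulVec x = x ∧ g2mat.mulVec x = x}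
      = ↑(Submodule.span ℤ ({fvec, tvec} : Set (Fin 10 → ℤ))) ∧
    LinearIndependent ℤ ![fvec, tvec] := by
  refine ⟨Set.Subset.antisymm ?_ ?_, linearIndependent_fvec_tvec⟩
  · rintro x ⟨h1, h2⟩
    exact Submodule.mem_span_pair.mpr
      ⟨_, _, (eq_smul_fvec_add_smul_tvec_of_mulVec_eq_self h1 h2).symm⟩
  · refine span_subset_setOf_mulVec_eq_self ?_
    rintro v (rfl | rfl)
    exacts [⟨g1mat_mulVec_fvec, g2mat_mulVec_fvec⟩, ⟨g1mat_mulVec_tvec, g2mat_mulVec_tvec⟩]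
end

section
/- The sublattice of g₁-fixed vectors {x ∈ ℤ¹⁰ : g₁x = x} is exactly the ℤ-span of the four vectors f, t, u and v; in particular the G₁-invariant homology of the dP₉ surface is free of rank 4 with basis {f, t, u, v}. -/
open Matrix

/-- The class `u = θ₂₁+θ₃₁+θ₄₁+3μ`. -/
def uvec : Fin 10 → ℤ := ![0,0,0,1,1,0,1,0,3,0]

/-- The class `v = 2t+θ₁₁`. -/
def vvec : Fin 10 → ℤ := ![-6,-6,3,2,4,4,6,2,6,6]


section AuxSimp
variable {α : Type*} {m : ℕ}
@[simp] lemma cons_val_five (x : α) (u : Fin m.succ.succ.succ.succ.succ → α) :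
    vecCons x u 5 = vecHead (vecTail (vecTail (vecTail (vecTail u)))) := rfl
@[simp] lemma cons_val_six (x : α) (u : Fin m.succ.succ.succ.succ.succ.succ → α) :
    vecCons x u 6 = vecHead (vecTail (vecTail (vecTail (vecTail (vecTail u))))) := rfl
@[simp] lemma cons_val_seven (x : α) (u : Fin m.succ.succ.succ.succ.succ.succ.succ → α) :
    vecCons x u 7 = vecHead (vecTail (vecTail (vecTail (vecTail (vecTail (vecTail u)))))) := rfl
@[simp] lemma cons_val_eight (x : α) (u : Fin m.succ.succ.succ.succ.succ.succ.succ.succ → α) :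
    vecCons x u 8 = vecHead (vecTail (vecTail (vecTail (vecTail (vecTail (vecTail (vecTail u))))))) := rfl
@[simp] lemma cons_val_nine (x : α) (u : Fin m.succ.succ.succ.succ.succ.succ.succ.succ.succ → α) :
    vecCons x u 9 =
      vecHead (vecTail (vecTail (vecTail (vecTail (vecTail (vecTail (vecTail (vecTail u)))))))) := rfl
@[simp] lemma fin_succ_two (n : ℕ) : (2 : Fin (n+3)).succ = 3 := rfl
@[simp] lemma fin_succ_three (n : ℕ) : (3 : Fin (n+4)).succ = 4 := rfl
@[simp] lemma fin_succ_four (n : ℕ) : (4 : Fin (n+5)).succ = 5 := rfl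
@[simp] lemma fin_succ_five (n : ℕ) : (5 : Fin (n+6)).succ = 6 := rfl
@[simp] lemma fin_succ_six (n : ℕ) : (6 : Fin (n+7)).succ = 7 := rfl
@[simp] lemma fin_succ_seven (n : ℕ) : (7 : Fin (n+8)).succ = 8 := rfl
@[simp] lemma fin_succ_eight (n : ℕ) : (8 : Fin (n+9)).succ = 9 := rfl
end AuxSimp

lemma fvec_fixed : g1mat.mulVec fvec = fvec := by
  funext i
  fin_cases i <;> simp [g1mat, fvec, Matrix.mulVec, dotProduct, Fin.sum_univ_succ]

lemma tvec_fixed : g1mat.mulVec tvec = tvec := by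
  funext i
  fin_cases i <;> simp [g1mat, tvec, Matrix.mulVec, dotProduct, Fin.sum_univ_succ]

lemma uvec_fixed : g1mat.mulVec uvec = uvec := by
  funext i
  fin_cases i <;> simp [g1mat, uvec, Matrix.mulVec, dotProduct, Fin.sum_univ_succ]

lemma vvec_fixed : g1mat.mulVec vvec = vvec := by
  funext i
  fin_cases i <;> simp [g1mat, vvec, Matrix.mulVec, dotProduct, Fin.sum_univ_succ]

/-- The sublattice of `g₁`-fixed vectors in ℤ¹⁰ is exactly the ℤ-span of `f`, `t`, `u`
and `v`; in particular the `G₁`-invariant homology of the dP₉ surface is free of rank 4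
with basis `{f, t, u, v}`. -/
theorem g1_invariant_homology_dP9 :
    {x : Fin 10 → ℤ | g1mat.mulVec x = x}
      = ↑(Submodule.span ℤ ({fvec, tvec, uvec, vvec} : Set (Fin 10 → ℤ))) ∧
    LinearIndependent ℤ ![fvec, tvec, uvec, vvec] := by
  constructor
  · ext x
    simp only [Set.mem_setOf_eq, SetLike.mem_coe]
    constructor
    · intro h
      have h0 := congrFun h 0
      have h3 := congrFun h 3
      have h4 := congrFun h 4
      have h5 := congrFun h 5
      have h6 := congrFun h 6
      have h7 := congrFun h 7
      simp [g1mat, Matrix.mulVec, dotProduct, Fin.sum_univ_succ] at h0 h3 h4 h5 h6 h7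
      have hx : x = (x 1 + x 9) • fvec + (x 9 - 2 * x 2) • tvec
          + (x 3 - (x 9 - x 5)) • uvec + (x 2 - (x 9 - x 5)) • vvec := by
        funext i
        fin_cases i <;>
          simp [fvec, tvec, uvec, vvec, Pi.smul_apply, smul_eq_mul] <;> linarith
      rw [hx]
      refine Submodule.add_mem _ (Submodule.add_mem _ (Submodule.add_mem _ ?_ ?_) ?_) ?_ <;>
        exact Submodule.smul_mem _ _ (Submodule.subset_span (by simp))
    · intro hx
      induction hx using Submodule.span_induction with
      | mem y hy =>
        rcases hy with rfl | rfl | rfl | rfl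
        · exact fvec_fixed
        · exact tvec_fixed
        · exact uvec_fixed
        · exact vvec_fixed
      | zero => simp [Matrix.mulVec_zero]
      | add y z _ _ hy hz => simp only [Matrix.mulVec_add, hy, hz]
      | smul c y _ hy => simp only [Matrix.mulVec_smul, hy]
  · rw [Fintype.linearIndependent_iff]
    intro g hg
    have e1 := congrFun hg 1
    have e2 := congrFun hg 2
    have e3 := congrFun hg 3
    have e9 := congrFun hg 9
    simp [Fin.sum_univ_succ, fvec, tvec, uvec, vvec] at e1 e2 e3 e9
    intro i
    fin_cases i <;> simp <;> linarith
end

section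
/- The intersection pairing B : L × L′ → ℤ defined by B((a,b), [(c,d)]) := aᵀMc + bᵀMd is well defined on the quotient L′, is invariant under the diagonal G-action (B(g·x, g·y) = B(x,y) for g ∈ {g₁,g₂}), and is a perfect (unimodular) pairing: the induced maps L → Hom_ℤ(L′,ℤ) and L′ → Hom_ℤ(L,ℤ) are isomorphisms. Hence the curve representation R and the divisor representation R^∨ are mutually dual ℤ₃×ℤ₃-representations. -/
open Matrix

/-- The intersection form of the dP₉ surface. -/
def Mmat : Matrix (Fin 10) (Fin 10) ℤ :=
  !![-1,1,0,0,0,0,0,0,0,0;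
     1,0,0,0,0,0,0,0,1,1;
     0,0,-2,0,0,0,0,0,0,1;
     0,0,0,-2,0,0,0,0,1,0;
     0,0,0,0,-2,1,0,0,1,0;
     0,0,0,0,1,-2,0,0,0,1;
     0,0,0,0,0,0,-2,1,1,1;
     0,0,0,0,0,0,1,-2,0,0;
     0,1,0,1,1,0,1,0,-1,0;
     0,1,1,0,0,1,1,0,0,-1]

/-- The ambient rank-20 lattice ℤ¹⁰ ⊕ ℤ¹⁰. -/
abbrev Wlat := (Fin 10 → ℤ) × (Fin 10 → ℤ)

/-- The linear form ℓ(x) = x₁ + x₉ + x₁₀. -/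
def ell (x : Fin 10 → ℤ) : ℤ := x 0 + x 8 + x 9

/-- The diagonal action of a matrix `g` on ℤ¹⁰ ⊕ ℤ¹⁰. -/
def act (g : Matrix (Fin 10) (Fin 10) ℤ) (x : Wlat) : Wlat :=
  (g.mulVec x.1, g.mulVec x.2)

/-- The rank-19 lattice `L = {(a,b) : ℓ(a) = ℓ(b)}` realizing the curve
representation `R = H₂(X̃,ℤ)`. -/
def Lsub : Submodule ℤ Wlat where
  carrier := {x | ell x.1 = ell x.2}
  add_mem' := by
    intro a b ha hb
    simp only [Set.mem_setOf_eq, ell, Prod.fst_add, Prod.snd_add, Pi.add_apply] at *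
    omega
  zero_mem' := by simp [ell]
  smul_mem' := by
    intro c x hx
    simp only [Set.mem_setOf_eq, ell, Prod.smul_fst, Prod.smul_snd, Pi.smul_apply,
      smul_eq_mul] at *
    linear_combination c * hx

/-- The intersection pairing `B((a,b),(c,d)) = aᵀMc + bᵀMd` on ℤ¹⁰ ⊕ ℤ¹⁰. -/
def bform (x y : Wlat) : ℤ :=
  x.1 ⬝ᵥ Mmat.mulVec y.1 + x.2 ⬝ᵥ Mmat.mulVec y.2


/-- Explicit integer inverse of `Mmat`. -/
def Nmat : Matrix (Fin 10) (Fin 10) ℤ :=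
  !![-12,-11,3,3,6,6,8,4,6,6;
     -11,-11,3,3,6,6,8,4,6,6;
     3,3,-2,0,-1,-2,-2,-1,0,-3;
     3,3,0,-2,-2,-1,-2,-1,-3,0;
     6,6,-1,-2,-4,-3,-4,-2,-4,-2;
     6,6,-2,-1,-3,-4,-4,-2,-2,-4;
     8,8,-2,-2,-4,-4,-6,-3,-4,-4;
     4,4,-1,-1,-2,-2,-3,-2,-2,-2;
     6,6,0,-3,-4,-2,-4,-2,-6,0;
     6,6,-3,0,-2,-4,-4,-2,0,-6]

lemma hMN : Mmat * Nmat = 1 := by decide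
lemma hNM : Nmat * Mmat = 1 := by decide
lemma hMsym : Mmatᵀ = Mmat := by decide
lemma hg1 : g1matᵀ * Mmat * g1mat = Mmat := by decide
lemma hg2 : g2matᵀ * Mmat * g2mat = Mmat := by decide

lemma vecMul_M (v : Fin 10 → ℤ) : v ᵥ* Mmat = Mmat *ᵥ v := by
  conv_lhs => rw [← hMsym]
  rw [Matrix.vecMul_transpose]

lemma bform_swap (x y : Wlat) :
    bform x y = Mmat *ᵥ x.1 ⬝ᵥ y.1 + Mmat *ᵥ x.2 ⬝ᵥ y.2 := by
  unfold bform
  rw [Matrix.dotProduct_mulVec, Matrix.dotProduct_mulVec, vecMul_M, vecMul_M]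

lemma inv_lemma (g : Matrix (Fin 10) (Fin 10) ℤ) (hg : gᵀ * Mmat * g = Mmat)
    (a b : Fin 10 → ℤ) : g *ᵥ a ⬝ᵥ Mmat *ᵥ (g *ᵥ b) = a ⬝ᵥ Mmat *ᵥ b := by
  rw [Matrix.mulVec_mulVec, Matrix.dotProduct_mulVec,
    show g *ᵥ a = a ᵥ* gᵀ from (Matrix.vecMul_transpose g a).symm,
    Matrix.vecMul_vecMul, ← Matrix.mul_assoc, hg, ← Matrix.dotProduct_mulVec]

lemma sum_single (w : Fin 10 → ℤ) : ∑ i : Fin 10, w i • Pi.single i (1:ℤ) = w := by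
  funext j
  simp [Finset.sum_apply, Pi.single_apply]

lemma decomp (χ : Wlat →ₗ[ℤ] ℤ) (y : Wlat) :
    χ y = (fun i => χ (Pi.single i 1, 0)) ⬝ᵥ y.1 + (fun i => χ (0, Pi.single i 1)) ⬝ᵥ y.2 := by
  have hA : (∑ i : Fin 10, y.1 i • ((Pi.single i 1, (0:Fin 10 → ℤ)) : Wlat)) = (y.1, 0) := by
    apply Prod.ext
    · rw [Prod.fst_sum]; simp only [Prod.smul_fst]; exact sum_single y.1
    · rw [Prod.snd_sum]; simp
  have hB : (∑ i : Fin 10, y.2 i • (((0:Fin 10 → ℤ), Pi.single i 1) : Wlat)) = (0, y.2) := by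
    apply Prod.ext
    · rw [Prod.fst_sum]; simp
    · rw [Prod.snd_sum]; simp only [Prod.smul_snd]; exact sum_single y.2
  have hy : y = (∑ i : Fin 10, y.1 i • ((Pi.single i 1, 0) : Wlat)) +
      ∑ i : Fin 10, y.2 i • ((0, Pi.single i 1) : Wlat) := by
    rw [hA, hB]; apply Prod.ext <;> simp
  conv_lhs => rw [hy]
  rw [map_add, map_sum, map_sum]
  simp only [_root_.map_smul, smul_eq_mul]
  simp [dotProduct, mul_comm]

lemma bf_fvec (x : Wlat) : bform x (fvec, -fvec) = ell x.1 - ell x.2 := by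
  have hMf : Mmat *ᵥ fvec = ![1,0,0,0,0,0,0,0,1,1] := by decide
  unfold bform
  simp only [Matrix.mulVec_neg, dotProduct_neg, hMf]
  simp [dotProduct, Fin.sum_univ_succ, ell,
    show (Fin.succ 2 : Fin 10) = 3 from rfl,
    show ((Fin.succ 2).succ : Fin 10) = 4 from rfl,
    show ((Fin.succ 2).succ.succ : Fin 10) = 5 from rfl,
    show ((Fin.succ 2).succ.succ.succ : Fin 10) = 6 from rfl,
    show ((Fin.succ 2).succ.succ.succ.succ : Fin 10) = 7 from rfl,
    show ((Fin.succ 2).succ.succ.succ.succ.succ : Fin 10) = 8 from rfl,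
    show ((Fin.succ 2).succ.succ.succ.succ.succ.succ : Fin 10) = 9 from rfl]
  ring

/-- The retraction `ℤ¹⁰⊕ℤ¹⁰ → L` used to extend functionals from `L`. -/
def rho : Wlat →ₗ[ℤ] ↥Lsub where
  toFun x := ⟨x - (ell x.1 - ell x.2) • ((Pi.single 0 1, 0) : Wlat), by
    show ell _ = ell _
    simp [ell, Pi.single_apply]
    ring⟩
  map_add' a b := by
    apply Subtype.ext
    show (a + b) - _ • _ = (a - _ • _) + (b - _ • _)
    have h : ell (a + b).1 - ell (a + b).2 =
        (ell a.1 - ell a.2) + (ell b.1 - ell b.2) := by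
      simp [ell]; ring
    rw [h, add_smul]
    abel
  map_smul' r a := by
    apply Subtype.ext
    show (r • a) - _ • _ = r • (a - _ • _)
    have h : ell (r • a).1 - ell (r • a).2 = r * (ell a.1 - ell a.2) := by
      simp [ell]; ring
    rw [h, smul_sub, mul_smul]

lemma rho_mem (x : Wlat) (hx : ell x.1 = ell x.2) (h2 : x ∈ Lsub) :
    rho x = ⟨x, h2⟩ := by
  apply Subtype.ext
  show x - _ • _ = x
  rw [hx, sub_self, zero_smul, sub_zero]
/-- The intersection pairing `B : L × L′ → ℤ`, `B((a,b),[(c,d)]) = aᵀMc + bᵀMd`, is well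
defined on the quotient `L′ = (ℤ¹⁰ ⊕ ℤ¹⁰)/ℤ(f,−f)` (i.e. it kills `(f,−f)` whenever the
first argument lies in `L`), is invariant under the diagonal `G`-action, and is a perfect
(unimodular) pairing: the induced maps `L → Hom(L′,ℤ)` and `L′ → Hom(L,ℤ)` are
isomorphisms.  Hence the curve representation `R` and the divisor representation `R^∨`
are mutually dual ℤ₃×ℤ₃-representations. -/
theorem intersection_pairing_perfect :
    (∀ x : Wlat, ell x.1 = ell x.2 → bform x (fvec, -fvec) = 0) ∧
    (∀ x y : Wlat, bform (act g1mat x) (act g1mat y) = bform x y) ∧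
    (∀ x y : Wlat, bform (act g2mat x) (act g2mat y) = bform x y) ∧
    (∀ χ : Wlat →ₗ[ℤ] ℤ, χ (fvec, -fvec) = 0 →
      ∃! x : Wlat, ell x.1 = ell x.2 ∧ ∀ y : Wlat, bform x y = χ y) ∧
    (∀ χ : ↥Lsub →ₗ[ℤ] ℤ, ∃ y : Wlat,
      (∀ x : ↥Lsub, bform (x : Wlat) y = χ x) ∧
      ∀ y' : Wlat, (∀ x : ↥Lsub, bform (x : Wlat) y' = χ x) →
        ∃ c : ℤ, y' = y + c • ((fvec, -fvec) : Wlat)) := by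
  have mulVec_NM : ∀ v : Fin 10 → ℤ, Nmat *ᵥ (Mmat *ᵥ v) = v := by
    intro v; rw [Matrix.mulVec_mulVec, hNM, Matrix.one_mulVec]
  have mulVec_MN : ∀ v : Fin 10 → ℤ, Mmat *ᵥ (Nmat *ᵥ v) = v := by
    intro v; rw [Matrix.mulVec_mulVec, hMN, Matrix.one_mulVec]
  refine ⟨?_, ?_, ?_, ?_, ?_⟩
  · -- well-definedness on the quotient
    intro x hx
    rw [bf_fvec, hx, sub_self]
  · -- g₁-invariance
    intro x y
    show g1mat *ᵥ x.1 ⬝ᵥ Mmat *ᵥ (g1mat *ᵥ y.1) + g1mat *ᵥ x.2 ⬝ᵥ Mmat *ᵥ (g1mat *ᵥ y.2) = _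
    rw [inv_lemma g1mat hg1, inv_lemma g1mat hg1]
    rfl
  · -- g₂-invariance
    intro x y
    show g2mat *ᵥ x.1 ⬝ᵥ Mmat *ᵥ (g2mat *ᵥ y.1) + g2mat *ᵥ x.2 ⬝ᵥ Mmat *ᵥ (g2mat *ᵥ y.2) = _
    rw [inv_lemma g2mat hg2, inv_lemma g2mat hg2]
    rfl
  · -- perfectness: L ≃ Hom(L′, ℤ)
    intro χ hχ
    set c : Fin 10 → ℤ := fun i => χ (Pi.single i 1, 0) with hc
    set d : Fin 10 → ℤ := fun i => χ (0, Pi.single i 1) with hd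
    have hkey : ∀ y : Wlat, bform (Nmat *ᵥ c, Nmat *ᵥ d) y = χ y := by
      intro y
      rw [bform_swap]
      show Mmat *ᵥ (Nmat *ᵥ c) ⬝ᵥ y.1 + Mmat *ᵥ (Nmat *ᵥ d) ⬝ᵥ y.2 = _
      rw [mulVec_MN, mulVec_MN, decomp χ y, hc, hd]
    refine ⟨(Nmat *ᵥ c, Nmat *ᵥ d), ⟨?_, hkey⟩, ?_⟩
    · -- the solution lies in L
      have h0 := hkey (fvec, -fvec)
      rw [bf_fvec, hχ] at h0
      show ell _ = ell _
      omega
    · -- uniqueness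
      rintro x' ⟨hell', hB'⟩
      have h1 : Mmat *ᵥ x'.1 = c := by
        funext i
        have := hB' (Pi.single i 1, 0)
        rw [bform_swap] at this
        simpa using this
      have h2 : Mmat *ᵥ x'.2 = d := by
        funext i
        have := hB' (0, Pi.single i 1)
        rw [bform_swap] at this
        simpa using this
      apply Prod.ext
      · show x'.1 = Nmat *ᵥ c
        rw [← h1, mulVec_NM]
      · show x'.2 = Nmat *ᵥ d
        rw [← h2, mulVec_NM]
  · -- perfectness: L′ ≃ Hom(L, ℤ)
    intro χ
    set ψ : Wlat →ₗ[ℤ] ℤ := χ.comp rho with hψdef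
    set u : Fin 10 → ℤ := fun i => ψ (Pi.single i 1, 0) with hu
    set v : Fin 10 → ℤ := fun i => ψ (0, Pi.single i 1) with hv
    have hby : ∀ x : Wlat, bform x (Nmat *ᵥ u, Nmat *ᵥ v) = ψ x := by
      intro x
      show x.1 ⬝ᵥ Mmat *ᵥ (Nmat *ᵥ u) + x.2 ⬝ᵥ Mmat *ᵥ (Nmat *ᵥ v) = _
      rw [mulVec_MN, mulVec_MN, decomp ψ x, hu, hv,
        dotProduct_comm x.1, dotProduct_comm x.2]
    refine ⟨(Nmat *ᵥ u, Nmat *ᵥ v), ?_, ?_⟩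
    · intro x
      rw [hby]
      show χ (rho (x : Wlat)) = χ x
      rw [rho_mem (x : Wlat) x.2 x.2]
    · -- uniqueness up to (f, -f)
      intro y' hY'
      have hz : ∀ x : ↥Lsub, bform (x : Wlat) (y' - ((Nmat *ᵥ u, Nmat *ᵥ v) : Wlat)) = 0 := by
        intro x
        have hsub : bform (x : Wlat) (y' - ((Nmat *ᵥ u, Nmat *ᵥ v) : Wlat)) =
            bform (x : Wlat) y' - bform (x : Wlat) (Nmat *ᵥ u, Nmat *ᵥ v) := by
          show (x : Wlat).1 ⬝ᵥ Mmat *ᵥ (y'.1 - _) + (x : Wlat).2 ⬝ᵥ Mmat *ᵥ (y'.2 - _) = _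
          rw [Matrix.mulVec_sub, Matrix.mulVec_sub, dotProduct_sub,
            dotProduct_sub]
          show _ = (x : Wlat).1 ⬝ᵥ Mmat *ᵥ y'.1 + (x : Wlat).2 ⬝ᵥ Mmat *ᵥ y'.2 -
            ((x : Wlat).1 ⬝ᵥ Mmat *ᵥ _ + (x : Wlat).2 ⬝ᵥ Mmat *ᵥ _)
          ring
        rw [hsub, hY' x, hby]
        have hψx : ψ (x : Wlat) = χ x := by
          show χ (rho (x : Wlat)) = χ x
          rw [rho_mem (x : Wlat) x.2 x.2]
        rw [hψx, sub_self]
      set z : Wlat := y' - ((Nmat *ᵥ u, Nmat *ᵥ v) : Wlat) with hzdef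
      set u' : Fin 10 → ℤ := Mmat *ᵥ z.1 with hu'
      set v' : Fin 10 → ℤ := Mmat *ᵥ z.2 with hv'
      have key : ∀ x : Wlat, ell x.1 = ell x.2 → x.1 ⬝ᵥ u' + x.2 ⬝ᵥ v' = 0 := by
        intro x hx
        have h1 := hz ⟨x, hx⟩
        rw [bform_swap] at h1
        calc x.1 ⬝ᵥ u' + x.2 ⬝ᵥ v'
            = Mmat *ᵥ x.1 ⬝ᵥ z.1 + Mmat *ᵥ x.2 ⬝ᵥ z.2 := by
              rw [hu', hv', Matrix.dotProduct_mulVec, vecMul_M,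
                Matrix.dotProduct_mulVec, vecMul_M]
          _ = 0 := h1
      have hzero : ∀ i : Fin 10, ell (Pi.single i (1:ℤ)) = 0 →
          u' i = 0 ∧ v' i = 0 := by
        intro i hi
        constructor
        · have := key (Pi.single i 1, 0)
            (by show ell (Pi.single i 1) = ell (0 : Fin 10 → ℤ); rw [hi]; simp [ell])
          simpa using this
        · have := key (0, Pi.single i 1)
            (by show ell (0 : Fin 10 → ℤ) = ell (Pi.single i 1); rw [hi]; simp [ell])
          simpa using this
      have hpair : ∀ i j : Fin 10, ell (Pi.single i (1:ℤ)) = 1 →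
          ell (Pi.single j (1:ℤ)) = 1 → u' i + v' j = 0 := by
        intro i j hi hj
        have := key (Pi.single i 1, Pi.single j 1)
          (by show ell (Pi.single i 1) = ell (Pi.single j 1); rw [hi, hj])
        simpa using this
      have e0 : ell (Pi.single (0 : Fin 10) (1:ℤ)) = 1 := by decide
      have e8 : ell (Pi.single (8 : Fin 10) (1:ℤ)) = 1 := by decide
      have e9 : ell (Pi.single (9 : Fin 10) (1:ℤ)) = 1 := by decide
      have h00 := hpair 0 0 e0 e0
      have h80 := hpair 8 0 e8 e0
      have h90 := hpair 9 0 e9 e0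
      have h08 := hpair 0 8 e0 e8
      have h09 := hpair 0 9 e0 e9
      have hMf : Mmat *ᵥ fvec = ![1,0,0,0,0,0,0,0,1,1] := by decide
      refine ⟨u' 0, ?_⟩
      have hu'eq : u' = (u' 0) • (Mmat *ᵥ fvec) := by
        rw [hMf]
        funext i
        fin_cases i
        · show u' 0 = u' 0 • (1:ℤ)
          rw [smul_eq_mul, mul_one]
        · show u' 1 = u' 0 • (0:ℤ)
          rw [smul_zero]
          exact (hzero 1 (by decide)).1
        · show u' 2 = u' 0 • (0:ℤ)
          rw [smul_zero]
          exact (hzero 2 (by decide)).1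
        · show u' 3 = u' 0 • (0:ℤ)
          rw [smul_zero]
          exact (hzero 3 (by decide)).1
        · show u' 4 = u' 0 • (0:ℤ)
          rw [smul_zero]
          exact (hzero 4 (by decide)).1
        · show u' 5 = u' 0 • (0:ℤ)
          rw [smul_zero]
          exact (hzero 5 (by decide)).1
        · show u' 6 = u' 0 • (0:ℤ)
          rw [smul_zero]
          exact (hzero 6 (by decide)).1
        · show u' 7 = u' 0 • (0:ℤ)
          rw [smul_zero]
          exact (hzero 7 (by decide)).1
        · show u' 8 = u' 0 • (1:ℤ)
          simp only [smul_eq_mul, mul_one]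
          omega
        · show u' 9 = u' 0 • (1:ℤ)
          simp only [smul_eq_mul, mul_one]
          omega
      have hv'eq : v' = (-(u' 0)) • (Mmat *ᵥ fvec) := by
        rw [hMf]
        funext i
        fin_cases i
        · show v' 0 = -u' 0 • (1:ℤ)
          simp only [smul_eq_mul, mul_one]
          omega
        · show v' 1 = -u' 0 • (0:ℤ)
          rw [smul_zero]
          exact (hzero 1 (by decide)).2
        · show v' 2 = -u' 0 • (0:ℤ)
          rw [smul_zero]
          exact (hzero 2 (by decide)).2
        · show v' 3 = -u' 0 • (0:ℤ)
          rw [smul_zero]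
          exact (hzero 3 (by decide)).2
        · show v' 4 = -u' 0 • (0:ℤ)
          rw [smul_zero]
          exact (hzero 4 (by decide)).2
        · show v' 5 = -u' 0 • (0:ℤ)
          rw [smul_zero]
          exact (hzero 5 (by decide)).2
        · show v' 6 = -u' 0 • (0:ℤ)
          rw [smul_zero]
          exact (hzero 6 (by decide)).2
        · show v' 7 = -u' 0 • (0:ℤ)
          rw [smul_zero]
          exact (hzero 7 (by decide)).2
        · show v' 8 = -u' 0 • (1:ℤ)
          simp only [smul_eq_mul, mul_one]
          omega
        · show v' 9 = -u' 0 • (1:ℤ)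
          simp only [smul_eq_mul, mul_one]
          omega
      have hz1 : z.1 = (u' 0) • fvec := by
        have h2 : z.1 = Nmat *ᵥ u' := by rw [hu', mulVec_NM]
        rw [h2]
        conv_lhs => rw [hu'eq]
        rw [Matrix.mulVec_smul, mulVec_NM]
      have hz2 : z.2 = (-(u' 0)) • fvec := by
        have h2 : z.2 = Nmat *ᵥ v' := by rw [hv', mulVec_NM]
        rw [h2]
        conv_lhs => rw [hv'eq]
        rw [Matrix.mulVec_smul, mulVec_NM]
      have : z = (u' 0) • ((fvec, -fvec) : Wlat) := by
        apply Prod.ext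
        · exact hz1
        · rw [hz2]
          show -(u' 0) • fvec = (u' 0) • (-fvec)
          rw [neg_smul, smul_neg]
      rw [← this, hzdef]
      abel
end

section
/- Let I ⊆ L be the ℤ-span of {x − g₁·x : x ∈ L} ∪ {x − g₂·x : x ∈ L}, and let v₁ := (0, e₉ − e₁) and v₂ := (0, e₁₀ − e₁) (where e_i are standard basis vectors of ℤ¹⁰; these are the classes σ×μ − σ×σ and σ×ν − σ×σ). Then 3v₁ ∈ I and 3v₂ ∈ I but v₁ ∉ I and v₂ ∉ I, so the classes of v₁ and v₂ in L/I have order exactly 3, and these two classes generate the torsion subgroup of L/I, which is isomorphic to ℤ/3 ⊕ ℤ/3. -/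
open Matrix

/-- The submodule of relations `I = span_ℤ({x − g₁·x : x ∈ L} ∪ {x − g₂·x : x ∈ L})`. -/
def Isub : Submodule ℤ Wlat :=
  Submodule.span ℤ
    {y : Wlat | ∃ x : Wlat, ell x.1 = ell x.2 ∧ (y = x - act g1mat x ∨ y = x - act g2mat x)}

/-- `v₁ = (0, e₉ − e₁)`, the class of `σ×μ − σ×σ`. -/
def v1 : Wlat := (0, ![-1,0,0,0,0,0,0,0,1,0])

/-- `v₂ = (0, e₁₀ − e₁)`, the class of `σ×ν − σ×σ`. -/
def v2 : Wlat := (0, ![-1,0,0,0,0,0,0,0,0,1])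

/-! Every linear form that is invariant under `g₁` and `g₂` on `L` vanishes on `I`. The forms
`ℓ(a)`, `θ(a)`, `θ(b)` are invariant with values in the torsion-free group `ℤ³`, so every torsion
class of `L/I` is represented by an element of their common kernel; an explicit solution of
`x - c v₁ - d v₂ = (1 - g₁) Y + (1 - g₂) Z` shows that such an element is an integral combination
of `v₁` and `v₂` modulo `I`. Since `3v₁, 3v₂ ∈ I`, these two classes span the torsion. Modulo 3
the μ- and ν-rows of `g₁` and `g₂` differ from the unit rows by `ℓ` or not at all, so the μ- and
ν-coordinates of `b - a` are invariant mod 3 on `L`; they send `v₁, v₂` to the standard basis of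
`(ℤ/3)²`, which identifies the torsion with `ℤ/3 × ℤ/3`. -/

open Submodule

section QuotientTorsion

variable {M : Type*} [AddCommGroup M]

theorem torsion_quotient_eq_span_image {F : Type*} [AddCommGroup F] [NoZeroSMulDivisors ℤ F]
    {N : Submodule ℤ M} {P : M →ₗ[ℤ] F} {S : Set M} {n : ℤ} (hn : n ≠ 0)
    (hNP : N ≤ LinearMap.ker P) (hPS : LinearMap.ker P ≤ span ℤ S ⊔ N)
    (hS : ∀ u ∈ S, n • u ∈ N) :
    torsion ℤ (M ⧸ N) = span ℤ (N.mkQ '' S) := by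
  refine le_antisymm ?_ (span_le.2 (Set.image_subset_iff.2 fun u hu => ?_))
  · intro t ht
    obtain ⟨x, rfl⟩ := N.mkQ_surjective t
    obtain ⟨⟨m, hm⟩, hmx⟩ := (mem_torsion_iff _).1 ht
    have hPmx : m • P x = 0 := by
      rw [← map_smul]
      exact hNP ((Quotient.mk_eq_zero N).1 (by simpa using hmx))
    have hPx : P x = 0 := (smul_eq_zero.1 hPmx).resolve_left (nonZeroDivisors.ne_zero hm)
    have := mem_map_of_mem (f := N.mkQ) (hPS hPx)
    rwa [Submodule.map_sup, map_span, mkQ_map_self, sup_bot_eq] at this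
  · refine (mem_torsion_iff _).2 ⟨⟨n, mem_nonZeroDivisors_of_ne_zero hn⟩, ?_⟩
    simpa using (Quotient.mk_eq_zero N).2 (hS u hu)

theorem bijective_domRestrict_span_pair {n : ℕ} (f : M →ₗ[ℤ] ZMod n × ZMod n) {w₁ w₂ : M}
    (h₁ : (n : ℤ) • w₁ = 0) (h₂ : (n : ℤ) • w₂ = 0) (hf₁ : f w₁ = (1, 0))
    (hf₂ : f w₂ = (0, 1)) :
    Function.Bijective (f.domRestrict (span ℤ {w₁, w₂})) := by
  have hf : ∀ c d : ℤ, f (c • w₁ + d • w₂) = ((c : ZMod n), (d : ZMod n)) := by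
    intro c d
    simp [hf₁, hf₂]
  refine ⟨(injective_iff_map_eq_zero _).2 ?_, ?_⟩
  · rintro ⟨z, hz⟩ hfz
    obtain ⟨c, d, rfl⟩ := mem_span_pair.1 hz
    have hcd : ((c : ZMod n), (d : ZMod n)) = 0 := (hf c d).symm.trans hfz
    obtain ⟨c, rfl⟩ := (ZMod.intCast_zmod_eq_zero_iff_dvd c n).1 (congrArg Prod.fst hcd)
    obtain ⟨d, rfl⟩ := (ZMod.intCast_zmod_eq_zero_iff_dvd d n).1 (congrArg Prod.snd hcd)
    ext
    simp [mul_comm (n : ℤ), mul_smul, h₁, h₂]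
  · rintro ⟨a, b⟩
    obtain ⟨c, rfl⟩ := ZMod.intCast_surjective a
    obtain ⟨d, rfl⟩ := ZMod.intCast_surjective b
    exact ⟨⟨c • w₁ + d • w₂, mem_span_pair.2 ⟨c, d, rfl⟩⟩, hf c d⟩

end QuotientTorsion

lemma g1mat_mulVec (a : Fin 10 → ℤ) : g1mat *ᵥ a =
    ![3 * a 3 - a 8 - a 9, a 1 + 3 * a 3 + a 5 + a 7 - a 8 - a 9, a 2, -2 * a 3 + a 8,
      -2 * a 3 - a 5 + a 8 + a 9, -a 3 + a 4 - a 5 + a 9, -2 * a 3 - a 7 + a 8 + a 9,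
      -a 3 + a 6 - a 7, a 0 - 3 * a 3 + 2 * a 8 + a 9, a 9] := by
  ext i
  fin_cases i <;>
    simp only [g1mat, mulVec, dotProduct, Fin.sum_univ_succ, Fin.sum_univ_zero, of_apply, cons_val,
      Fin.reduceFinMk, Fin.reduceSucc, Fin.succ_zero_eq_one] <;>
    ring

lemma g2mat_mulVec (a : Fin 10 → ℤ) : g2mat *ᵥ a =
    ![3 * a 2 - a 8 - a 9, a 1 + 3 * a 2 + a 4 + a 7 - a 8 - a 9, -2 * a 2 + a 9, a 3,
      -a 2 - a 4 + a 5 + a 8, -2 * a 2 - a 4 + a 8 + a 9, -2 * a 2 - a 7 + a 8 + a 9,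
      -a 2 + a 6 - a 7, a 8, a 0 - 3 * a 2 + a 8 + 2 * a 9] := by
  ext i
  fin_cases i <;>
    simp only [g2mat, mulVec, dotProduct, Fin.sum_univ_succ, Fin.sum_univ_zero, of_apply, cons_val,
      Fin.reduceFinMk, Fin.reduceSucc, Fin.succ_zero_eq_one] <;>
    ring

def thetaForm (x : Fin 10 → ℤ) : ℤ := 3 * x 1 + x 2 + x 3 + x 4 + x 5 + x 6 + x 7

def freeInvariant : Wlat →ₗ[ℤ] ℤ × ℤ × ℤ where
  toFun x := (ell x.1, thetaForm x.1, thetaForm x.2)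
  map_add' x y := by
    simp only [ell, thetaForm, Prod.fst_add, Prod.snd_add, Pi.add_apply, Prod.mk_add_mk]
    ext <;> ring
  map_smul' c x := by
    simp only [ell, thetaForm, Prod.smul_fst, Prod.smul_snd, Pi.smul_apply, smul_eq_mul,
      RingHom.id_apply, Prod.smul_mk]
    ext <;> ring

def mod3Invariant : Wlat →ₗ[ℤ] ZMod 3 × ZMod 3 where
  toFun x := (((x.2 8 - x.1 8 : ℤ) : ZMod 3), ((x.2 9 - x.1 9 : ℤ) : ZMod 3))
  map_add' x y := by
    simp only [Prod.fst_add, Prod.snd_add, Pi.add_apply, Prod.mk_add_mk]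
    ext <;> push_cast <;> ring
  map_smul' c x := by
    simp only [Prod.smul_fst, Prod.smul_snd, Pi.smul_apply, smul_eq_mul, RingHom.id_apply,
      Prod.smul_mk]
    ext <;> simp only [zsmul_eq_mul] <;> push_cast <;> ring

lemma Isub_le_ker {F : Type*} [AddCommGroup F] (f : Wlat →ₗ[ℤ] F)
    (hf : ∀ x ∈ Lsub, f (act g1mat x) = f x ∧ f (act g2mat x) = f x) :
    Isub ≤ LinearMap.ker f := by
  rw [Isub, span_le]
  rintro _ ⟨x, hx, rfl | rfl⟩ <;> simp [(hf x hx).1, (hf x hx).2]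

lemma Isub_le_ker_freeInvariant : Isub ≤ LinearMap.ker freeInvariant := by
  refine Isub_le_ker _ fun x _ => ⟨?_, ?_⟩ <;>
  · simp only [freeInvariant, LinearMap.coe_mk, AddHom.coe_mk, act, ell, thetaForm,
      g1mat_mulVec, g2mat_mulVec, Matrix.cons_val]
    ext <;> simp only <;> ring

lemma Isub_le_ker_mod3Invariant : Isub ≤ LinearMap.ker mod3Invariant := by
  refine Isub_le_ker _ fun x hx => ⟨?_, ?_⟩ <;>
  · change ell x.1 = ell x.2 at hx
    simp only [ell] at hx
    simp only [mod3Invariant, LinearMap.coe_mk, AddHom.coe_mk, act, g1mat_mulVec, g2mat_mulVec,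
      Matrix.cons_val, Prod.mk.injEq, ZMod.intCast_eq_intCast_iff_dvd_sub, Nat.cast_ofNat,
      and_true, true_and]
    omega

lemma mod3Invariant_v1 : mod3Invariant v1 = (1, 0) := by decide
lemma mod3Invariant_v2 : mod3Invariant v2 = (0, 1) := by decide

lemma v1_notMem_Isub : v1 ∉ Isub := fun h => by
  simpa [mod3Invariant_v1] using Isub_le_ker_mod3Invariant h

lemma v2_notMem_Isub : v2 ∉ Isub := fun h => by
  simpa [mod3Invariant_v2] using Isub_le_ker_mod3Invariant h

lemma sub_act_mem_Isub {x : Wlat} (hx : ell x.1 = ell x.2) :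
    x - act g1mat x ∈ Isub ∧ x - act g2mat x ∈ Isub :=
  ⟨subset_span ⟨x, hx, Or.inl rfl⟩, subset_span ⟨x, hx, Or.inr rfl⟩⟩

lemma three_smul_v1_mem_Isub : (3 : ℤ) • v1 ∈ Isub := by
  let w : Wlat := (0, ![0, 0, 0, 1, 0, -2, -1, -1, 3, -3])
  have hw : (3 : ℤ) • v1 = w - act g1mat w := by decide
  exact hw ▸ (sub_act_mem_Isub (x := w) (by decide)).1

lemma three_smul_v2_mem_Isub : (3 : ℤ) • v2 ∈ Isub := by
  let w : Wlat := (![3, 0, 0, 0, 0, -2, -3, -1, 0, -3], 0)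
  let w' : Wlat := (![0, 0, -1, 0, 0, 0, 0, 0, 0, -3], ![-3, 0, 0, 0, 0, 0, 0, 0, 0, 0])
  have hw : (3 : ℤ) • v2 = (w - act g1mat w) + (w' - act g2mat w') := by decide
  exact hw ▸ add_mem (sub_act_mem_Isub (x := w) (by decide)).1
    (sub_act_mem_Isub (x := w') (by decide)).2

lemma exists_sub_mem_Isub_of_freeInvariant_eq_zero {x : Wlat} (hx : x ∈ Lsub)
    (hPx : freeInvariant x = 0) : ∃ c d : ℤ, x - (c • v1 + d • v2) ∈ Isub := by
  obtain ⟨a, b⟩ := x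
  change ell a = ell b at hx
  simp only [freeInvariant, LinearMap.coe_mk, AddHom.coe_mk, Prod.mk_eq_zero] at hPx
  obtain ⟨ha, hθa, hθb⟩ := hPx
  simp only [ell, thetaForm] at hx ha hθa hθb
  let Y : Wlat :=
    (![-a 2 + a 6 + a 7 - a 8, 0, 0, a 7, -2 * a 1 - a 3 - a 5 - a 6, -a 1 - a 6 - a 7, 0, 0,
        -a 3 + 3 * a 7, a 2 + a 3 - a 6 - a 7],
      ![3 * a 7 - a 8 - 3 * b 1 - 2 * b 2 - b 3 - b 4 - b 5 - 3 * b 7, 0, 0, b 7,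
        b 1 + b 2 + b 4 + b 7, 2 * b 1 + b 2 + b 3 + b 4 + b 5, 0, 0, -b 3 + 3 * b 7,
        3 * b 1 + 2 * b 2 + 2 * b 3 + b 4 + b 5])
  let Z : Wlat :=
    (![a 0 + a 2 + a 8, 0, 0, 0, 0, 0, 0, 0, 0, -a 2],
      ![a 0 + a 8 + b 2, 0, 0, 0, 0, 0, 0, 0, 0, -b 2])
  have hY : ell Y.1 = ell Y.2 := by simp only [Y, ell, Matrix.cons_val]; linarith
  have hZ : ell Z.1 = ell Z.2 := by simp only [Z, ell, Matrix.cons_val]; linarith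
  refine ⟨3 * a 7 - a 8 - 3 * b 7 + b 8, a 0 + a 8 - b 0 - b 8, ?_⟩
  have hdecomp : ((a, b) : Wlat) -
        ((3 * a 7 - a 8 - 3 * b 7 + b 8) • v1 + (a 0 + a 8 - b 0 - b 8) • v2) =
      (Y - act g1mat Y) + (Z - act g2mat Z) := by
    simp only [Y, Z, act, g1mat_mulVec, g2mat_mulVec]
    ext j <;> fin_cases j <;>
      simp only [v1, v2, Prod.fst_sub, Prod.snd_sub, Prod.fst_add, Prod.snd_add, Prod.smul_fst,
        Prod.smul_snd, Pi.sub_apply, Pi.add_apply, Pi.smul_apply, Pi.zero_apply, smul_eq_mul,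
        Fin.reduceFinMk, Matrix.cons_val] <;> omega
  exact hdecomp ▸ add_mem (sub_act_mem_Isub hY).1 (sub_act_mem_Isub hZ).2

lemma comap_Isub_le_ker_comp {F : Type*} [AddCommGroup F] {f : Wlat →ₗ[ℤ] F}
    (hf : Isub ≤ LinearMap.ker f) :
    Isub.comap Lsub.subtype ≤ LinearMap.ker (f ∘ₗ Lsub.subtype) :=
  (comap_mono hf).trans_eq (LinearMap.ker_comp _ _).symm

lemma ker_freeInvariant_comp_le (h1 : v1 ∈ Lsub) (h2 : v2 ∈ Lsub) :
    LinearMap.ker (freeInvariant ∘ₗ Lsub.subtype) ≤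
      span ℤ {⟨v1, h1⟩, ⟨v2, h2⟩} ⊔ Isub.comap Lsub.subtype := by
  intro x hx
  obtain ⟨c, d, hcd⟩ := exists_sub_mem_Isub_of_freeInvariant_eq_zero x.2 hx
  exact mem_sup.2 ⟨_, mem_span_pair.2 ⟨c, d, rfl⟩, _, hcd, add_sub_cancel _ _⟩

/-- `3v₁ ∈ I` and `3v₂ ∈ I` but `v₁ ∉ I` and `v₂ ∉ I`, so the classes of `v₁` and `v₂`
in `L/I` have order exactly 3, and these two classes generate the torsion subgroup of
`L/I`, which is isomorphic to `ℤ/3 ⊕ ℤ/3`. -/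
theorem torsion_curve_generators :
    (3 : ℤ) • v1 ∈ Isub ∧ (3 : ℤ) • v2 ∈ Isub ∧ v1 ∉ Isub ∧ v2 ∉ Isub ∧
    ∀ (h1 : v1 ∈ Lsub) (h2 : v2 ∈ Lsub),
      addOrderOf (Submodule.Quotient.mk (p := Isub.comap Lsub.subtype) ⟨v1, h1⟩) = 3 ∧
      addOrderOf (Submodule.Quotient.mk (p := Isub.comap Lsub.subtype) ⟨v2, h2⟩) = 3 ∧
      Submodule.span ℤ
          {Submodule.Quotient.mk (p := Isub.comap Lsub.subtype) ⟨v1, h1⟩,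
           Submodule.Quotient.mk (p := Isub.comap Lsub.subtype) ⟨v2, h2⟩}
        = Submodule.torsion ℤ (↥Lsub ⧸ Isub.comap Lsub.subtype) ∧
      Nonempty (↥(Submodule.torsion ℤ (↥Lsub ⧸ Isub.comap Lsub.subtype)) ≃ₗ[ℤ]
        (ZMod 3 × ZMod 3)) := by
  refine ⟨three_smul_v1_mem_Isub, three_smul_v2_mem_Isub, v1_notMem_Isub, v2_notMem_Isub,
    fun h1 h2 => ?_⟩
  set N := Isub.comap Lsub.subtype
  have hmk : ∀ x : Lsub, N.mkQ x = 0 ↔ (x : Wlat) ∈ Isub := fun x => Quotient.mk_eq_zero N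
  have h3₁ : (3 : ℤ) • N.mkQ ⟨v1, h1⟩ = 0 := by
    rw [← map_zsmul]; exact (hmk _).2 three_smul_v1_mem_Isub
  have h3₂ : (3 : ℤ) • N.mkQ ⟨v2, h2⟩ = 0 := by
    rw [← map_zsmul]; exact (hmk _).2 three_smul_v2_mem_Isub
  have hspan : torsion ℤ (Lsub ⧸ N) = span ℤ {N.mkQ ⟨v1, h1⟩, N.mkQ ⟨v2, h2⟩} := by
    rw [← Set.image_pair]
    refine torsion_quotient_eq_span_image three_ne_zero
      (comap_Isub_le_ker_comp Isub_le_ker_freeInvariant) (ker_freeInvariant_comp_le h1 h2) ?_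
    rintro _ (rfl | rfl)
    exacts [three_smul_v1_mem_Isub, three_smul_v2_mem_Isub]
  have hQ := bijective_domRestrict_span_pair
    (N.liftQ _ (comap_Isub_le_ker_comp Isub_le_ker_mod3Invariant)) h3₁ h3₂
    mod3Invariant_v1 mod3Invariant_v2
  exact ⟨addOrderOf_eq_prime (by exact_mod_cast h3₁) fun h => v1_notMem_Isub ((hmk _).1 h),
    addOrderOf_eq_prime (by exact_mod_cast h3₂) fun h => v2_notMem_Isub ((hmk _).1 h),
    hspan.symm, ⟨(LinearEquiv.ofEq _ _ hspan).trans (LinearEquiv.ofBijective _ hQ)⟩⟩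
end

section
/- For each h ∈ {g₁, g₂, g₁g₂} (acting diagonally on L), the coinvariant lattice L / span_ℤ{x − h·x : x ∈ L} is isomorphic as an abelian group to ℤ⁷ ⊕ ℤ/3. (This is the computation H₀(ℤ₃, R_i) ≅ ℤ⁷ ⊕ ℤ₃, independent of which of the three cyclic subgroups ℤ₃ ⊂ ℤ₃×ℤ₃ is used; it gives H₂(X̃/ℤ₃, ℤ) ≅ ℤ⁷ ⊕ ℤ₃.) -/
open Matrix

/-!
The coinvariants are read off from an explicit certificate, as produced by a Smith normal
form computation: integer forms `p₁, …, p₇` and `c` that vanish (`c` modulo 3) on the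
relations `x - h • x`, and elements `v₁, …, v₇, w` of `L` which they send to the standard
generators of `ℤ⁷ ⊕ ℤ/3`. If moreover `3 • w` is a relation and every `x ∈ L` is congruent
modulo the relations to `∑ pᵢ(x) vᵢ + c(x) w`, then `(p, c mod 3)` identifies the
coinvariants with `ℤ⁷ ⊕ ℤ/3`. All these conditions are linear in `x`, so they only need to
be checked on a spanning family of `L`: the image of the standard basis under the retraction
`(a, b) ↦ (a, b + (ℓ(a) - ℓ(b)) e₀)` of `ℤ¹⁰ ⊕ ℤ¹⁰` onto `L`. There they are finite
integer computations.
-/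

open Matrix

theorem Submodule.nonempty_quotient_equiv_pi_prod_zmod {M : Type*} [AddCommGroup M] {n m : ℕ}
    (S : Submodule ℤ M)
    (p : M →ₗ[ℤ] Fin n → ℤ) (c : M →ₗ[ℤ] ℤ) (v : Fin n → M) (w : M)
    (hpS : ∀ s ∈ S, p s = 0) (hcS : ∀ s ∈ S, (c s : ZMod m) = 0)
    (hpv : ∀ i, p (v i) = Pi.single i 1) (hcv : ∀ i, (c (v i) : ZMod m) = 0)
    (hpw : p w = 0) (hcw : (c w : ZMod m) = 1) (hw : (m : ℤ) • w ∈ S)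
    (hsplit : ∀ x, x - ∑ i, p x i • v i - c x • w ∈ S) :
    Nonempty ((M ⧸ S) ≃ₗ[ℤ] (Fin n → ℤ) × ZMod m) := by
  let π : M →ₗ[ℤ] (Fin n → ℤ) × ZMod m :=
    p.prod ((Int.castAddHom (ZMod m)).toIntLinearMap ∘ₗ c)
  have hker : LinearMap.ker π = S := by
    refine le_antisymm (fun x hx => ?_) fun s hs => by simp [π, hpS s hs, hcS s hs]
    obtain ⟨hp, hc⟩ : p x = 0 ∧ (c x : ZMod m) = 0 := by simpa [π] using hx
    obtain ⟨k, hk⟩ := (ZMod.intCast_zmod_eq_zero_iff_dvd _ _).1 hc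
    have hx : x = (x - ∑ i, p x i • v i - c x • w) + k • ((m : ℤ) • w) := by
      simp [hp, hk, mul_comm, mul_smul]
    rw [hx]
    exact S.add_mem (hsplit x) (S.smul_mem k hw)
  have hsurj : Function.Surjective π := by
    rintro ⟨t, z⟩
    obtain ⟨k, rfl⟩ := ZMod.intCast_surjective z
    refine ⟨∑ i, t i • v i + k • w, Prod.ext ?_ ?_⟩
    · ext j
      simp [π, hpv, hpw, Pi.single_apply]
    · simp [π, hcv, hcw]
  exact ⟨(Submodule.quotEquivOfEq _ _ hker.symm).trans (π.quotKerEquivOfSurjective hsurj)⟩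

theorem mem_Lsub {x : Wlat} : x ∈ Lsub ↔ ell x.1 = ell x.2 := Iff.rfl

def ellForm : (Fin 10 → ℤ) →ₗ[ℤ] ℤ :=
  LinearMap.proj (R := ℤ) (φ := fun _ => ℤ) 0 + LinearMap.proj 8 + LinearMap.proj 9

theorem ellForm_apply (x : Fin 10 → ℤ) : ellForm x = ell x := rfl

def retractLsub : Wlat →ₗ[ℤ] Wlat :=
  (LinearMap.fst ℤ _ _).prod (LinearMap.snd ℤ _ _ + LinearMap.single ℤ (fun _ => ℤ) 0 ∘ₗ
    (ellForm ∘ₗ LinearMap.fst ℤ _ _ - ellForm ∘ₗ LinearMap.snd ℤ _ _))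

theorem retractLsub_apply_of_mem {x : Wlat} (hx : x ∈ Lsub) : retractLsub x = x := by
  simp [retractLsub, ellForm_apply, mem_Lsub.1 hx]

def wlatSingle : Fin 10 ⊕ Fin 10 → Wlat :=
  Sum.elim (fun i => (Pi.single i 1, 0)) (fun i => (0, Pi.single i 1))

theorem span_wlatSingle : Submodule.span ℤ (Set.range wlatSingle) = ⊤ := by
  let b := (Pi.basisFun ℤ (Fin 10)).prod (Pi.basisFun ℤ (Fin 10))
  have hb : wlatSingle = b := by
    funext j
    rcases j with i | i <;> simp [b, wlatSingle, Module.Basis.prod_apply]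
  rw [hb]
  exact b.span_eq

def lsubGen : Fin 10 ⊕ Fin 10 → Wlat := retractLsub ∘ wlatSingle

theorem Lsub_le_span_lsubGen : Lsub ≤ Submodule.span ℤ (Set.range lsubGen) := by
  intro x hx
  rw [← retractLsub_apply_of_mem hx, lsubGen, Set.range_comp, Submodule.span_image, span_wlatSingle]
  exact Submodule.mem_map_of_mem Submodule.mem_top

theorem map_mem_of_forall_lsubGen {N : Type*} [AddCommGroup N] (f : Wlat →ₗ[ℤ] N)
    {T : Submodule ℤ N} (hf : ∀ j, f (lsubGen j) ∈ T) {x : Wlat} (hx : x ∈ Lsub) : f x ∈ T :=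
  (Lsub_le_span_lsubGen.trans (Submodule.span_le.2 (Set.range_subset_iff.2 hf) :
    _ ≤ T.comap f)) hx

def actLin (h : Matrix (Fin 10) (Fin 10) ℤ) : Wlat →ₗ[ℤ] Wlat :=
  h.mulVecLin.prodMap h.mulVecLin

theorem actLin_apply (h : Matrix (Fin 10) (Fin 10) ℤ) (x : Wlat) : actLin h x = act h x := rfl

def coinvariantRelations (h : Matrix (Fin 10) (Fin 10) ℤ) : Submodule ℤ Wlat :=
  Submodule.span ℤ {y : Wlat | ∃ x : Wlat, ell x.1 = ell x.2 ∧ y = x - act h x}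

theorem coinvariantRelations_le_ker {N : Type*} [AddCommGroup N]
    {h : Matrix (Fin 10) (Fin 10) ℤ} (f : Wlat →ₗ[ℤ] N)
    (hf : ∀ j, f (lsubGen j - act h (lsubGen j)) = 0) :
    coinvariantRelations h ≤ LinearMap.ker f := by
  refine Submodule.span_le.2 ?_
  rintro _ ⟨x, hx, rfl⟩
  have := map_mem_of_forall_lsubGen (f ∘ₗ (LinearMap.id - actLin h)) (T := ⊥)
    (by simpa [actLin_apply] using hf) hx
  simpa only [LinearMap.comp_apply, LinearMap.sub_apply, LinearMap.id_apply, actLin_apply,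
    Submodule.mem_bot, SetLike.mem_coe, LinearMap.mem_ker] using this

def pairing (p : Wlat) : Wlat →ₗ[ℤ] ℤ :=
  (dotProductBilin ℤ ℤ p.1).coprod (dotProductBilin ℤ ℤ p.2)

structure CoinvariantCertificate (h : Matrix (Fin 10) (Fin 10) ℤ) (n m : ℕ) where
  p : Fin n → Wlat
  c : Wlat
  v : Fin n → Wlat
  w : Wlat
  u : Wlat
  y : Fin 10 ⊕ Fin 10 → Wlat
  v_mem : ∀ i, ell (v i).1 = ell (v i).2
  w_mem : ell w.1 = ell w.2
  u_mem : ell u.1 = ell u.2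
  y_mem : ∀ j, ell (y j).1 = ell (y j).2
  p_sub_act : ∀ j k, pairing (p k) (lsubGen j - act h (lsubGen j)) = 0
  c_sub_act : ∀ j, (pairing c (lsubGen j - act h (lsubGen j)) : ZMod m) = 0
  p_v : ∀ i k, pairing (p k) (v i) = (Pi.single i 1 : Fin n → ℤ) k
  c_v : ∀ i, (pairing c (v i) : ZMod m) = 0
  p_w : ∀ k, pairing (p k) w = 0
  c_w : (pairing c w : ZMod m) = 1
  smul_w : (m : ℤ) • w = u - act h u
  split : ∀ j, lsubGen j - ∑ k, pairing (p k) (lsubGen j) • v k - pairing c (lsubGen j) • w =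
    y j - act h (y j)

theorem CoinvariantCertificate.nonempty_equiv {h : Matrix (Fin 10) (Fin 10) ℤ} {n m : ℕ}
    (C : CoinvariantCertificate h n m) :
    Nonempty ((↥Lsub ⧸ (coinvariantRelations h).comap Lsub.subtype) ≃ₗ[ℤ]
      (Fin n → ℤ) × ZMod m) := by
  have hp := coinvariantRelations_le_ker (LinearMap.pi fun k => pairing (C.p k))
    fun j => funext (C.p_sub_act j)
  have hc := coinvariantRelations_le_ker
    ((Int.castAddHom (ZMod m)).toIntLinearMap ∘ₗ pairing C.c) C.c_sub_act
  refine Submodule.nonempty_quotient_equiv_pi_prod_zmod _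
    ((LinearMap.pi fun k => pairing (C.p k)) ∘ₗ Lsub.subtype) (pairing C.c ∘ₗ Lsub.subtype)
    (fun i => ⟨C.v i, C.v_mem i⟩) ⟨C.w, C.w_mem⟩ (fun s hs => hp hs) (fun s hs => hc hs)
    (fun i => funext (C.p_v i)) C.c_v (funext C.p_w) C.c_w ?_ ?_
  · show ((m : ℤ) • C.w) ∈ coinvariantRelations h
    rw [C.smul_w]
    exact Submodule.subset_span ⟨C.u, C.u_mem, rfl⟩
  · rintro ⟨x, hx⟩
    have key := map_mem_of_forall_lsubGen (T := coinvariantRelations h)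
      (LinearMap.id - ∑ k, (pairing (C.p k)).smulRight (C.v k) - (pairing C.c).smulRight C.w)
      (fun j => by
        have : C.y j - act h (C.y j) ∈ coinvariantRelations h :=
          Submodule.subset_span ⟨C.y j, C.y_mem j, rfl⟩
        simpa [← C.split j] using this) hx
    simpa [Submodule.mem_comap] using key

def certificateG1 : CoinvariantCertificate g1mat 7 3 where
  p := ![(![0, 3, 0, 1, 1, 1, 1, 1, 0, 0], 0),
      (0, ![0, 3, 0, 1, 1, 1, 1, 1, 0, 0]),
      (![1, 0, 0, 0, 0, 0, 0, 0, 1, 1], 0),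
      (![0, 0, 1, 0, 0, 0, 0, 0, 0, 0], 0),
      (![0, 0, 0, 0, 0, 0, 0, 0, 0, 1], 0),
      (0, ![0, 0, 1, 0, 0, 0, 0, 0, 0, 0]),
      (0, ![0, 0, 0, 0, 0, 0, 0, 0, 0, 1])]
  c := (![0, -3, 0, 0, -3, 0, 0, 0, -1, 0], ![0, 9, 0, 3, 3, 3, 3, 0, 1, 0])
  v := ![(![0, 0, 0, 0, 0, 0, 0, 1, 0, 0], 0),
      (0, ![0, 0, 0, 0, 0, 0, 0, 1, 0, 0]),
      (![1, 0, 0, 0, 0, 0, 0, 0, 0, 0], ![1, 0, 0, 0, 0, 0, 0, 0, 0, 0]),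
      (![0, 0, 1, 0, 0, 0, 0, 0, 0, 0], 0),
      (![-1, 0, 0, 0, 0, 0, 0, 0, 0, 1], 0),
      (0, ![0, 0, 1, 0, 0, 0, 0, 0, 0, 0]),
      (0, ![-1, 0, 0, 0, 0, 0, 0, 0, 0, 1])]
  w := (0, ![-1, 0, 0, 0, 0, 0, 0, 0, 1, 0])
  u := (0, ![-3, 0, 0, 1, 1, 0, 1, 0, 3, 0])
  y := Sum.elim
    ![0,
      (![-3, 0, 0, -1, 0, 2, 2, 0, -3, 3], ![-3, 0, 0, 0, 0, 0, 0, 0, 0, 0]),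
      0,
      (![-1, 0, 0, 0, 0, 1, 1, 0, -1, 2], 0),
      (![-1, 0, 0, -1, 0, 1, 0, 0, -3, 1], ![-3, 0, 0, 0, 0, 0, 0, 0, 0, 0]),
      (![-1, 0, 0, 0, 0, 1, 1, 0, 0, 1], 0),
      (![0, 0, 0, 0, 0, 0, 1, 0, 0, 0], 0),
      0,
      (![-1, 0, 0, 0, 0, 0, 0, 0, 0, 0], ![-1, 0, 0, 0, 0, 0, 0, 0, 0, 0]),
      0]
    ![0,
      (0, ![6, 0, 0, -3, -2, 2, 0, 0, -9, 3]),
      0,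
      (0, ![2, 0, 0, -1, -1, 1, 0, 0, -4, 2]),
      (0, ![2, 0, 0, -1, 0, 1, 0, 0, -3, 1]),
      (0, ![2, 0, 0, -1, -1, 1, 0, 0, -3, 1]),
      (0, ![3, 0, 0, -1, -1, 0, 0, 0, -3, 0]),
      0,
      0,
      0]
  v_mem := by decide
  w_mem := by decide
  u_mem := by decide
  y_mem := by decide
  p_sub_act := by decide
  c_sub_act := by decide
  p_v := by decide
  c_v := by decide
  p_w := by decide
  c_w := by decide
  smul_w := by decide
  split := by decide

def certificateG2 : CoinvariantCertificate g2mat 7 3 where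
  p := ![(0, ![0, 0, 0, 1, 0, 0, 0, 0, 0, 0]),
      (0, ![0, 3, 1, 0, 1, 1, 1, 1, 0, 0]),
      (![1, 0, 0, 0, 0, 0, 0, 0, 1, 1], 0),
      (![0, 0, 0, 0, 0, 0, 0, 0, 1, 0], 0),
      (![0, 0, 0, 1, 0, 0, 0, 0, 0, 0], 0),
      (0, ![0, 0, 0, 0, 0, 0, 0, 0, 1, 0]),
      (![0, 3, 1, 0, 1, 1, 1, 1, 0, 0], 0)]
  c := (![0, 0, 0, 0, 0, 0, 0, 0, 0, -1], ![0, 9, 3, 0, 3, 3, 3, 0, 0, 1])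
  v := ![(0, ![0, 0, 0, 1, 0, 0, 0, 0, 0, 0]),
      (0, ![0, 0, 0, 0, 0, 0, 0, 1, 0, 0]),
      (![1, 0, 0, 0, 0, 0, 0, 0, 0, 0], ![1, 0, 0, 0, 0, 0, 0, 0, 0, 0]),
      (![-1, 0, 0, 0, 0, 0, 0, 0, 1, 0], 0),
      (![0, 0, 0, 1, 0, 0, 0, 0, 0, 0], 0),
      (0, ![-1, 0, 0, 0, 0, 0, 0, 0, 1, 0]),
      (![0, 0, 0, 0, 0, 0, 0, 1, 0, 0], 0)]
  w := (0, ![-1, 0, 0, 0, 0, 0, 0, 0, 0, 1])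
  u := (0, ![-3, 0, 1, 0, 0, 1, 1, 0, 0, 3])
  y := Sum.elim
    ![0,
      (![-3, 0, 0, 0, 2, 1, 3, 0, 3, 0], 0),
      (![-1, 0, 0, 0, 1, 0, 1, 0, 2, -1], 0),
      0,
      (![-1, 0, 0, 0, 1, 0, 1, 0, 1, 0], 0),
      (![-1, 0, 0, 0, 1, 1, 1, 0, 1, 0], 0),
      (![0, 0, 0, 0, 0, 0, 1, 0, 0, 0], 0),
      0,
      0,
      (![-1, 0, 0, 0, 0, 0, 0, 0, 0, 0], ![-1, 0, 0, 0, 0, 0, 0, 0, 0, 0])]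
    ![0,
      (0, ![6, 0, -3, 0, 2, -2, 0, 0, 3, -9]),
      (0, ![2, 0, -1, 0, 1, -1, 0, 0, 2, -4]),
      0,
      (0, ![2, 0, -1, 0, 1, -1, 0, 0, 1, -3]),
      (0, ![2, 0, -1, 0, 1, 0, 0, 0, 1, -3]),
      (0, ![3, 0, -1, 0, 0, -1, 0, 0, 0, -3]),
      0,
      0,
      0]
  v_mem := by decide
  w_mem := by decide
  u_mem := by decide
  y_mem := by decide
  p_sub_act := by decide
  c_sub_act := by decide
  p_v := by decide
  c_v := by decide
  p_w := by decide
  c_w := by decide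
  smul_w := by decide
  split := by decide

def certificateG1G2 : CoinvariantCertificate (g1mat * g2mat) 7 3 where
  p := ![(![0, 3, 1, 1, 1, 1, 1, 1, 0, 0], 0),
      (0, ![0, 3, 1, 1, 1, 1, 1, 1, 0, 0]),
      (![1, 0, 0, 0, 0, 0, 0, 0, 1, 1], 0),
      (![0, 0, 0, 0, -2, 1, 0, 0, 1, 0], 0),
      (![0, 0, 0, 0, 1, -2, 0, 0, 0, 1], 0),
      (0, ![0, 0, 0, 0, -2, 1, 0, 0, 1, 0]),
      (0, ![0, 0, 0, 0, 1, -2, 0, 0, 0, 1])]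
  c := (![0, 0, 0, 0, -1, 2, 0, 0, 0, 0], ![0, 0, 0, 0, -2, 1, 0, 0, 0, 0])
  v := ![(![0, 0, 0, 0, 0, 0, 0, 1, 0, 0], 0),
      (0, ![0, 0, 0, 0, 0, 0, 0, 1, 0, 0]),
      (![1, 0, 0, 0, 0, 0, 0, 0, 0, 0], ![1, 0, 0, 0, 0, 0, 0, 0, 0, 0]),
      (![-1, 0, 0, 0, 0, 0, 0, 0, 1, 0], 0),
      (![-1, 0, 0, 0, 0, 0, 0, 0, 0, 1], 0),
      (0, ![-1, 0, 0, 0, 0, 0, 0, 0, 1, 0]),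
      (0, ![-1, 0, 0, 0, 0, 0, 0, 0, 0, 1])]
  w := (0, ![-1, 0, 0, 0, 0, 1, 0, -1, -1, 2])
  u := (![-3, 0, 1, 1, 0, 0, 3, 1, 3, 3], ![-6, 0, 3, 0, 0, 0, 3, 0, 0, 9])
  y := Sum.elim
    ![0,
      (![0, 0, 0, 0, 0, 0, -1, -2, 0, 0], 0),
      (![1, 0, 0, 0, 0, 0, -1, -1, 0, -1], 0),
      (![1, 0, 0, 0, 0, 0, -1, -1, -1, 0], 0),
      (![-2, 0, 0, 1, 0, 0, 1, 0, 3, 0], ![-2, 0, 1, 0, 0, 0, 1, 0, 0, 3]),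
      (![1, 0, 0, -1, 0, 0, -2, -1, -3, 0], ![4, 0, -2, 0, 0, 0, -2, 0, 0, -6]),
      (![0, 0, 0, 0, 0, 0, 0, -1, 0, 0], 0),
      0,
      0,
      0]
    ![0,
      (0, ![0, 0, 0, 0, 0, 0, -1, -2, 0, 0]),
      (0, ![1, 0, 0, 0, 0, 0, -1, -1, 0, -1]),
      (0, ![1, 0, 0, 0, 0, 0, -1, -1, -1, 0]),
      (0, ![-3, 0, 1, 0, 0, 0, 0, -1, 0, 3]),
      0,
      (0, ![0, 0, 0, 0, 0, 0, 0, -1, 0, 0]),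
      0,
      0,
      0]
  v_mem := by decide
  w_mem := by decide
  u_mem := by decide
  y_mem := by decide
  p_sub_act := by decide
  c_sub_act := by decide
  p_v := by decide
  c_v := by decide
  p_w := by decide
  c_w := by decide
  smul_w := by decide
  split := by decide

/-- For each `h ∈ {g₁, g₂, g₁g₂}` (acting diagonally on `L`), the coinvariant lattice
`L / span_ℤ{x − h·x : x ∈ L}` is isomorphic as an abelian group to `ℤ⁷ ⊕ ℤ/3`.  This is
the computation `H₀(ℤ₃, R_i) ≅ ℤ⁷ ⊕ ℤ₃`, independent of which of the three cyclic
subgroups `ℤ₃ ⊂ ℤ₃×ℤ₃` is used; it gives `H₂(X̃/ℤ₃, ℤ) ≅ ℤ⁷ ⊕ ℤ₃`. -/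
theorem coinvariant_curve_lattice_cyclic :
    ∀ h ∈ ({g1mat, g2mat, g1mat * g2mat} : Set (Matrix (Fin 10) (Fin 10) ℤ)),
      Nonempty ((↥Lsub ⧸
          ((Submodule.span ℤ
            {y : Wlat | ∃ x : Wlat, ell x.1 = ell x.2 ∧ y = x - act h x}).comap
              Lsub.subtype))
        ≃ₗ[ℤ] ((Fin 7 → ℤ) × ZMod 3)) := by
  rintro h (rfl | rfl | rfl)
  exacts [certificateG1.nonempty_equiv, certificateG2.nonempty_equiv,
    certificateG1G2.nonempty_equiv]
end
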